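/- (Bounded generalized von Neumann inequality for product measures.) Let d ≥ 1 and let (X_1,μ_1),…,(X_d,μ_d) be finite probability spaces with product measure μ on X = X_1 × ⋯ × X_d. Let h : X → ℝ and, for each 1 ≤ j ≤ d, let u_j : ∏_{k ≠ j} X_k → [0,1]. Then |∫_X h(x) ∏_{j=1}^d u_j(x_{[d]∖{j}}) dμ(x)| ≤ ‖h‖_□. -/

import Mathlib

/-!
Write `A T` for the average over `x, y` of the product of `h` over the vertices `P_ω(x, y)`,
`ω ⊆ T`, of the subcube spanned by the coordinates in `T`, times, for each `k ∉ T`, the product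
of `u k` over the same vertices. Then `A ∅` is the integral on the left and `A univ` is
`‖h‖_□ ^ 2 ^ d`, so it suffices that adding a coordinate `j ∉ T` at least squares `A`.
Since no vertex of the `T`-cube reads `y j` and `u j` does not read coordinate `j` at all,
resampling `x j` writes `A T` as the average of `V * S` with `0 ≤ V ≤ 1`, where `S` is the
average over `x j` of the remaining factors. Cauchy–Schwarz gives `A T ^ 2 ≤ 𝔼 S ^ 2`, and
`𝔼 S ^ 2 = A (insert j T)` because the vertices of the larger cube are those of the `T`-cube
at `x` together with those at `x` with `x j` replaced by `y j`.
-/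

noncomputable section

/-- The box norm of `h` with respect to the product of the discrete probability measures `μ i`. -/
def boxNormP {d : ℕ} (X : Fin d → Type*) [∀ i, Fintype (X i)]
    (μ : (i : Fin d) → X i → ℝ) (h : ((i : Fin d) → X i) → ℝ) : ℝ :=
  (∑ x : (i : Fin d) → X i, ∑ y : (i : Fin d) → X i,
    (∏ i, μ i (x i)) * (∏ i, μ i (y i)) *
      ∏ ω : Fin d → Bool, h (fun i => if ω i then y i else x i)) ^ (((2 : ℝ) ^ d)⁻¹)

open Finset Function

section ProdExpect

variable {ι : Type*} [Fintype ι] [DecidableEq ι] {X : ι → Type*} {μ : ∀ i, X i → ℝ}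

theorem prod_update_mul (x : ∀ i, X i) (j : ι) (a : X j) :
    (∏ i, μ i (update x j a i)) * μ j (x j) = (∏ i, μ i (x i)) * μ j a := by
  rw [← Finset.mul_prod_erase _ _ (mem_univ j), ← Finset.mul_prod_erase _ _ (mem_univ j),
    update_self, Finset.prod_congr rfl fun i hi => by rw [update_of_ne (ne_of_mem_erase hi)]]
  ring

variable [∀ i, Fintype (X i)]

variable (μ) in
def prodExpect (f : (∀ i, X i) → ℝ) : ℝ :=
  ∑ x, (∏ i, μ i (x i)) * f x

theorem sum_prod_eq_one (hμ1 : ∀ i, ∑ a, μ i a = 1) : ∑ x : ∀ i, X i, ∏ i, μ i (x i) = 1 := by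
  rw [← Fintype.prod_sum]
  exact Finset.prod_eq_one fun i _ => hμ1 i

theorem prodExpect_const (hμ1 : ∀ i, ∑ a, μ i a = 1) (c : ℝ) :
    prodExpect μ (fun _ => c) = c := by
  rw [prodExpect, ← Finset.sum_mul, sum_prod_eq_one hμ1, one_mul]

theorem prodExpect_mono (hμ0 : ∀ i a, 0 ≤ μ i a) {f g : (∀ i, X i) → ℝ} (hfg : ∀ x, f x ≤ g x) :
    prodExpect μ f ≤ prodExpect μ g :=
  Finset.sum_le_sum fun x _ =>
    mul_le_mul_of_nonneg_left (hfg x) (Finset.prod_nonneg fun i _ => hμ0 i _)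

theorem sq_prodExpect_le (hμ0 : ∀ i a, 0 ≤ μ i a) (hμ1 : ∀ i, ∑ a, μ i a = 1)
    (f : (∀ i, X i) → ℝ) : prodExpect μ f ^ 2 ≤ prodExpect μ (fun x => f x ^ 2) :=
  Real.pow_arith_mean_le_arith_mean_pow_of_even _ _ _
    (fun _ _ => Finset.prod_nonneg fun i _ => hμ0 i _) (sum_prod_eq_one hμ1) even_two

theorem sq_prodExpect_mul_le (hμ0 : ∀ i a, 0 ≤ μ i a) (hμ1 : ∀ i, ∑ a, μ i a = 1)
    {v : (∀ i, X i) → ℝ} (hv0 : ∀ x, 0 ≤ v x) (hv1 : ∀ x, v x ≤ 1) (f : (∀ i, X i) → ℝ) :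
    prodExpect μ (fun x => v x * f x) ^ 2 ≤ prodExpect μ (fun x => f x ^ 2) :=
  (sq_prodExpect_le hμ0 hμ1 _).trans <| prodExpect_mono hμ0 fun x => by
    rw [mul_pow]
    exact mul_le_of_le_one_left (sq_nonneg _) (pow_le_one₀ (hv0 x) (hv1 x))

theorem sum_mul_prodExpect {α : Type*} (s : Finset α) (c : α → ℝ) (f : α → (∀ i, X i) → ℝ) :
    ∑ a ∈ s, c a * prodExpect μ (f a) = prodExpect μ (fun x => ∑ a ∈ s, c a * f a x) := by
  simp only [prodExpect, Finset.mul_sum]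
  rw [Finset.sum_comm]
  exact Finset.sum_congr rfl fun x _ => Finset.sum_congr rfl fun a _ => by ring

theorem prodExpect_eq_resample {j : ι} (hμ1 : ∑ a, μ j a = 1) (f : (∀ i, X i) → ℝ) :
    prodExpect μ f = prodExpect μ (fun x => ∑ a, μ j a * f (update x j a)) := by
  have hσ : Involutive fun p : (∀ i, X i) × X j => (update p.1 j p.2, p.1 j) := fun p => by simp
  calc prodExpect μ f
      = ∑ p : (∀ i, X i) × X j, (∏ i, μ i (p.1 i)) * μ j p.2 * f p.1 := by
        simp only [prodExpect, Fintype.sum_prod_type, mul_right_comm _ (μ j _), ← Finset.mul_sum,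
          hμ1, mul_one]
    _ = ∑ p : (∀ i, X i) × X j, (∏ i, μ i (p.1 i)) * μ j p.2 * f (update p.1 j p.2) :=
        (Fintype.sum_bijective _ hσ.bijective _ _ fun p => by rw [prod_update_mul]).symm
    _ = _ := by
        simp only [prodExpect, Fintype.sum_prod_type, Finset.mul_sum, mul_assoc]

end ProdExpect

section CubeProduct

variable {ι : Type*} [DecidableEq ι] {X : ι → Type*}

/-- `s.piecewise y x` is the vertex `P_ω(x, y)` for `ω` the indicator of `s`. -/
def cubeProduct (T : Finset ι) (g : (∀ i, X i) → ℝ) (x y : ∀ i, X i) : ℝ :=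
  ∏ s ∈ T.powerset, g (s.piecewise y x)

variable {T : Finset ι} {j : ι} (g : (∀ i, X i) → ℝ) (x y : ∀ i, X i)

@[simp]
theorem cubeProduct_empty : cubeProduct ∅ g x y = g x := by
  simp [cubeProduct]

theorem cubeProduct_insert (hj : j ∉ T) :
    cubeProduct (insert j T) g x y =
      cubeProduct T g x y * cubeProduct T g (update x j (y j)) y := by
  rw [cubeProduct, prod_powerset_insert hj]
  congr 1
  refine Finset.prod_congr rfl fun s hs => ?_
  rw [piecewise_insert, update_piecewise_of_notMem _ _ _ fun hjs => hj (mem_powerset.1 hs hjs)]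

theorem cubeProduct_update_right (hj : j ∉ T) (b : X j) :
    cubeProduct T g x (update y j b) = cubeProduct T g x y := by
  refine Finset.prod_congr rfl fun s hs =>
    congrArg g (piecewise_congr _ (fun i hi => ?_) fun _ _ => rfl)
  exact update_of_ne (fun hij : i = j => hj (mem_powerset.1 hs (hij ▸ hi))) _ _

theorem cubeProduct_update_left (hj : j ∉ T) (hg : ∀ x a, g (update x j a) = g x) (a : X j) :
    cubeProduct T g (update x j a) y = cubeProduct T g x y := by
  refine Finset.prod_congr rfl fun s hs => ?_
  rw [← update_piecewise_of_notMem _ _ _ fun hjs => hj (mem_powerset.1 hs hjs), hg]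

theorem cubeProduct_nonneg {g : (∀ i, X i) → ℝ} (hg : ∀ x, 0 ≤ g x) : 0 ≤ cubeProduct T g x y :=
  Finset.prod_nonneg fun _ _ => hg _

theorem cubeProduct_le_one {g : (∀ i, X i) → ℝ} (hg0 : ∀ x, 0 ≤ g x) (hg1 : ∀ x, g x ≤ 1) :
    cubeProduct T g x y ≤ 1 :=
  Finset.prod_le_one (fun _ _ => hg0 _) fun _ _ => hg1 _

theorem cubeProduct_univ [Fintype ι] :
    cubeProduct univ g x y = ∏ ω : ι → Bool, g (fun i => if ω i then y i else x i) := by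
  refine (Fintype.prod_equiv
    { toFun := fun ω => univ.filter (ω · = true)
      invFun := fun s i => decide (i ∈ s)
      left_inv := fun ω => by ext; simp
      right_inv := fun s => by ext; simp } _ _ fun ω => ?_).symm
  congr 1
  ext i
  simp [Finset.piecewise]

end CubeProduct

section PartialBoxIntegral

variable {ι : Type*} [Fintype ι] [DecidableEq ι] {X : ι → Type*} [∀ i, Fintype (X i)]
  {μ : ∀ i, X i → ℝ}

variable (μ) in
def partialBoxIntegral (h : (∀ i, X i) → ℝ) (v : ι → (∀ i, X i) → ℝ) (T : Finset ι) : ℝ :=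
  prodExpect μ fun x => prodExpect μ fun y =>
    cubeProduct T h x y * ∏ k ∈ Tᶜ, cubeProduct T (v k) x y

variable {h : (∀ i, X i) → ℝ} {v : ι → (∀ i, X i) → ℝ}

theorem partialBoxIntegral_empty (hμ1 : ∀ i, ∑ a, μ i a = 1) :
    partialBoxIntegral μ h v ∅ = prodExpect μ (fun x => h x * ∏ k, v k x) := by
  simp only [partialBoxIntegral, cubeProduct_empty, compl_empty, prodExpect_const hμ1]

theorem sq_partialBoxIntegral_le_insert (hμ0 : ∀ i a, 0 ≤ μ i a) (hμ1 : ∀ i, ∑ a, μ i a = 1)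
    {T : Finset ι} {j : ι} (hj : j ∉ T) (hv0 : ∀ x, 0 ≤ v j x) (hv1 : ∀ x, v j x ≤ 1)
    (hv : ∀ x a, v j (update x j a) = v j x) :
    partialBoxIntegral μ h v T ^ 2 ≤ partialBoxIntegral μ h v (insert j T) := by
  set R : (∀ i, X i) → (∀ i, X i) → ℝ := fun x y =>
    cubeProduct T h x y * ∏ k ∈ (insert j T)ᶜ, cubeProduct T (v k) x y
  set S : (∀ i, X i) → (∀ i, X i) → ℝ := fun x y => ∑ a, μ j a * R (update x j a) y
  have hR : ∀ x y b, R x (update y j b) = R x y := fun x y b => by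
    simp only [R, cubeProduct_update_right _ _ _ hj]
  have hA : partialBoxIntegral μ h v T =
      prodExpect μ fun x => prodExpect μ fun y => cubeProduct T (v j) x y * S x y := by
    have hsplit : ∀ x y, cubeProduct T h x y * ∏ k ∈ Tᶜ, cubeProduct T (v k) x y =
        cubeProduct T (v j) x y * R x y := fun x y => by
      simp only [R, compl_insert]
      rw [← mul_prod_erase _ _ (mem_compl.2 hj)]
      ring
    simp only [partialBoxIntegral, hsplit]
    rw [prodExpect_eq_resample (hμ1 j)]
    simp only [cubeProduct_update_left _ _ _ hj hv, sum_mul_prodExpect, S, Finset.mul_sum,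
      mul_left_comm]
  have hB : partialBoxIntegral μ h v (insert j T) =
      prodExpect μ fun x => prodExpect μ fun y => S x y ^ 2 := by
    have hsplit : ∀ x y, cubeProduct (insert j T) h x y *
        ∏ k ∈ (insert j T)ᶜ, cubeProduct (insert j T) (v k) x y =
        R x y * R (update x j (y j)) y := fun x y => by
      simp only [R, cubeProduct_insert _ _ _ hj, prod_mul_distrib]
      ring
    simp only [partialBoxIntegral, hsplit]
    conv_lhs => enter [2, x]; rw [prodExpect_eq_resample (hμ1 j)]
    rw [prodExpect_eq_resample (hμ1 j)]
    simp only [hR, update_self, update_idem, sum_mul_prodExpect]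
    refine congrArg (prodExpect μ) (funext fun x => congrArg (prodExpect μ) (funext fun y => ?_))
    rw [sq, Finset.sum_mul_sum]
    simp only [Finset.mul_sum]
    exact sum_congr rfl fun a _ => sum_congr rfl fun b _ => by ring
  calc partialBoxIntegral μ h v T ^ 2
      ≤ prodExpect μ fun x => (prodExpect μ fun y => cubeProduct T (v j) x y * S x y) ^ 2 := by
        rw [hA]; exact sq_prodExpect_le hμ0 hμ1 _
    _ ≤ partialBoxIntegral μ h v (insert j T) := by
        rw [hB]
        exact prodExpect_mono hμ0 fun x =>
          sq_prodExpect_mul_le hμ0 hμ1 (fun y => cubeProduct_nonneg x y hv0)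
            (fun y => cubeProduct_le_one x y hv0 hv1) _

theorem abs_partialBoxIntegral_empty_pow_le (hμ0 : ∀ i a, 0 ≤ μ i a)
    (hμ1 : ∀ i, ∑ a, μ i a = 1) (hv0 : ∀ k x, 0 ≤ v k x) (hv1 : ∀ k x, v k x ≤ 1)
    (hv : ∀ k x a, v k (update x k a) = v k x) {T : Finset ι} (hT : T.Nonempty) :
    |partialBoxIntegral μ h v ∅| ^ 2 ^ #T ≤ partialBoxIntegral μ h v T := by
  induction hT using Finset.Nonempty.cons_induction with
  | singleton j =>
    simpa [sq_abs] using
      sq_partialBoxIntegral_le_insert hμ0 hμ1 (notMem_empty j) (hv0 j) (hv1 j) (hv j)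
  | cons j T hj hT ih =>
    rw [cons_eq_insert, card_insert_of_notMem hj, pow_succ, pow_mul]
    exact (pow_le_pow_left₀ (by positivity) ih 2).trans
      (sq_partialBoxIntegral_le_insert hμ0 hμ1 hj (hv0 j) (hv1 j) (hv j))

theorem partialBoxIntegral_univ :
    partialBoxIntegral μ h v univ = prodExpect μ fun x => prodExpect μ fun y =>
      ∏ ω : ι → Bool, h (fun i => if ω i then y i else x i) := by
  simp only [partialBoxIntegral, compl_univ, prod_empty, mul_one, cubeProduct_univ]

theorem abs_prodExpect_mul_prod_pow_le [Nonempty ι] (hμ0 : ∀ i a, 0 ≤ μ i a)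
    (hμ1 : ∀ i, ∑ a, μ i a = 1) (hv0 : ∀ k x, 0 ≤ v k x) (hv1 : ∀ k x, v k x ≤ 1)
    (hv : ∀ k x a, v k (update x k a) = v k x) :
    |prodExpect μ fun x => h x * ∏ k, v k x| ^ 2 ^ Fintype.card ι ≤
      prodExpect μ fun x => prodExpect μ fun y =>
        ∏ ω : ι → Bool, h (fun i => if ω i then y i else x i) := by
  simpa only [partialBoxIntegral_empty hμ1, partialBoxIntegral_univ, card_univ] using
    abs_partialBoxIntegral_empty_pow_le hμ0 hμ1 hv0 hv1 hv univ_nonempty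

end PartialBoxIntegral

/-- Bounded generalized von Neumann inequality for product measures. -/
theorem bounded_von_neumann (d : ℕ) (hd : 1 ≤ d) (X : Fin d → Type)
    [∀ i, Fintype (X i)] (μ : (i : Fin d) → X i → ℝ)
    (hμ0 : ∀ i x, 0 ≤ μ i x) (hμ1 : ∀ i, ∑ x, μ i x = 1)
    (h : ((i : Fin d) → X i) → ℝ)
    (u : (j : Fin d) → ((k : {k : Fin d // k ≠ j}) → X k.1) → ℝ)
    (hu : ∀ j y, 0 ≤ u j y ∧ u j y ≤ 1) :
    |∑ x : (i : Fin d) → X i,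
      (∏ i, μ i (x i)) * (h x * ∏ j, u j (fun k => x k.1))| ≤ boxNormP X μ h := by
  have : Nonempty (Fin d) := ⟨⟨0, hd⟩⟩
  have hpow := abs_prodExpect_mul_prod_pow_le hμ0 hμ1 (h := h)
    (v := fun j x => u j fun k => x k.1) (fun j _ => (hu j _).1) (fun j _ => (hu j _).2)
    fun j x a => congrArg (u j) (funext fun k => update_of_ne k.2 a x)
  rw [Fintype.card_fin] at hpow
  have hbox : boxNormP X μ h = (prodExpect μ fun x => prodExpect μ fun y =>
      ∏ ω : Fin d → Bool, h (fun i => if ω i then y i else x i)) ^ ((2 : ℝ) ^ d)⁻¹ := by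
    simp only [boxNormP, prodExpect, Finset.mul_sum, mul_assoc]
  change |prodExpect μ fun x => h x * ∏ j, u j fun k => x k.1| ≤ _
  rw [hbox, ← Real.pow_rpow_inv_natCast (abs_nonneg _) (pow_ne_zero d two_ne_zero),
    Nat.cast_pow, Nat.cast_ofNat]
  exact Real.rpow_le_rpow (by positivity) hpow (by positivity)
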